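/- arXiv:2002.10907 — 5 statements merged into one kernel-verified Lean document; each statement's English description precedes it below -/
import Mathlib

section
/- Let c > 0, α ∈ (0,1), ε > 0, M ≥ 0 with M·ε^{1-α} < c, and Φ̄ > 1. Let η : [0,∞) → (0,∞) be a C¹ nonincreasing function with η(0) = ε and -η'(t) ≤ M·η(t) for all t ≥ 0. Let V : [0,∞) → [0,∞) be differentiable and suppose that for every t ≥ 0, if either (t ≥ Φ̄ and V(t) > η(t)/2) or ((1 - 1/Φ̄)·η(t) ≤ V(t) ≤ η(t)), then V'(t) ≤ -c·V(t)^α. Then there exists a time t̄ ≥ 0 such that V(t̄) ≤ η(t̄)/2 and, for every t ≥ t̄, V(t) ≤ max(1/2, 1 - 1/Φ̄)·η(t) < η(t). -/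
open Set Filter Topology

/-- entry plus trapping in the time-varying domain.
If the Lyapunov-type differential inequality `V' ≤ -c V^α` holds both when
`t ≥ Φ̄` and `V(t) > η(t)/2`, and when `(1 - 1/Φ̄)η(t) ≤ V(t) ≤ η(t)`, then there
is a time `t̄ ≥ 0` with `V(t̄) ≤ η(t̄)/2` after which
`V(t) ≤ max(1/2, 1 - 1/Φ̄)·η(t) < η(t)`. -/
theorem stmt_0
    (c α ε M Φ : ℝ)
    (hc : 0 < c) (hα : α ∈ Set.Ioo (0 : ℝ) 1) (hε : 0 < ε) (hM : 0 ≤ M)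
    (hMε : M * ε ^ (1 - α) < c) (hΦ : 1 < Φ)
    (η η' V V' : ℝ → ℝ)
    (hηpos : ∀ t, 0 ≤ t → 0 < η t)
    (hηderiv : ∀ t, 0 ≤ t → HasDerivWithinAt η (η' t) (Set.Ici 0) t)
    (hη'cont : ContinuousOn η' (Set.Ici 0))
    (hηmono : AntitoneOn η (Set.Ici 0))
    (hη0 : η 0 = ε)
    (hη' : ∀ t, 0 ≤ t → -η' t ≤ M * η t)
    (hVnonneg : ∀ t, 0 ≤ t → 0 ≤ V t)
    (hVderiv : ∀ t, 0 ≤ t → HasDerivWithinAt V (V' t) (Set.Ici 0) t)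
    (hVineq : ∀ t, 0 ≤ t →
      ((Φ ≤ t ∧ η t / 2 < V t) ∨ ((1 - 1 / Φ) * η t ≤ V t ∧ V t ≤ η t)) →
      V' t ≤ -c * V t ^ α) :
    ∃ tbar, 0 ≤ tbar ∧ V tbar ≤ η tbar / 2 ∧
      ∀ t, tbar ≤ t →
        V t ≤ max (1 / 2) (1 - 1 / Φ) * η t ∧
        max (1 / 2) (1 - 1 / Φ) * η t < η t := by
  obtain ⟨hα0, hα1⟩ := hα
  have hΦ0 : (0:ℝ) < Φ := lt_trans one_pos hΦ
  obtain ⟨k, hk⟩ : ∃ k : ℝ, k = max (1 / 2) (1 - 1 / Φ) := ⟨_, rfl⟩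
  rw [← hk]
  have hk_half : (1/2:ℝ) ≤ k := hk ▸ le_max_left _ _
  have hkΦ : 1 - 1/Φ ≤ k := hk ▸ le_max_right _ _
  have hk1 : k < 1 := by
    rw [hk]
    apply max_lt (by norm_num)
    have : 0 < 1/Φ := by positivity
    linarith
  have hk0 : (0:ℝ) < k := by linarith
  have hηε : ∀ t, 0 ≤ t → η t ≤ ε := by
    intro t ht
    have := hηmono self_mem_Ici ht ht
    rwa [hη0] at this
  have hVcont : ContinuousOn V (Ici 0) := fun t ht => (hVderiv t ht).continuousWithinAt
  have hηcont : ContinuousOn η (Ici 0) := fun t ht => (hηderiv t ht).continuousWithinAt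
  have h1α : 0 < 1 - α := by linarith
  have hc1α : 0 < c * (1-α) := by positivity
  -- Phase 1: entry in finite time
  obtain ⟨T, hT⟩ : ∃ T : ℝ, T = Φ + V Φ ^ (1-α) / (c * (1-α)) + 1 := ⟨_, rfl⟩
  have hVΦ : 0 ≤ V Φ := hVnonneg Φ hΦ0.le
  have hΦT : Φ < T := by
    have h0 : 0 ≤ V Φ ^ (1-α) / (c * (1-α)) := by positivity
    rw [hT]; linarith
  have hentry : ∃ s ∈ Icc Φ T, V s ≤ η s / 2 := by
    by_contra h
    push_neg at h
    have hVpos : ∀ s ∈ Icc Φ T, 0 < V s := by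
      intro s hs
      have := hηpos s (le_trans hΦ0.le hs.1)
      have := h s hs
      linarith
    obtain ⟨W, hW⟩ : ∃ W : ℝ → ℝ, W = fun t => V t ^ (1-α) + c * (1-α) * t := ⟨_, rfl⟩
    have hWval : ∀ t, W t = V t ^ (1-α) + c * (1-α) * t := fun t => by rw [hW]
    have hWcont : ContinuousOn W (Icc Φ T) := by
      rw [hW]
      apply ContinuousOn.add
      · exact (hVcont.mono (fun x hx => le_trans hΦ0.le hx.1)).rpow_const
          (fun x hx => Or.inr h1α.le)
      · exact (continuous_const.mul continuous_id).continuousOn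
    have hWd : ∀ x ∈ Ioo Φ T,
        HasDerivAt W (V' x * (1-α) * V x ^ (1-α-1) + c*(1-α)) x := by
      intro x hx
      have hx0 : 0 < x := lt_trans hΦ0 hx.1
      have hVx : HasDerivAt V (V' x) x :=
        (hVderiv x hx0.le).hasDerivAt (Ici_mem_nhds hx0)
      have h1 : HasDerivAt (fun t => V t ^ (1-α)) (V' x * (1-α) * V x ^ (1-α-1)) x :=
        hVx.rpow_const (Or.inl (hVpos x (Ioo_subset_Icc_self hx)).ne')
      have h2 : HasDerivAt (fun t : ℝ => c * (1-α) * t) (c*(1-α)) x := by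
        simpa using (hasDerivAt_id x).const_mul (c*(1-α))
      rw [hW]
      exact h1.add h2
    have hWneg : ∀ x ∈ Ioo Φ T, V' x * (1-α) * V x ^ (1-α-1) + c*(1-α) ≤ 0 := by
      intro x hx
      have hx0 : 0 < x := lt_trans hΦ0 hx.1
      have hVx0 : 0 < V x := hVpos x (Ioo_subset_Icc_self hx)
      have hV' : V' x ≤ -c * V x ^ α :=
        hVineq x hx0.le (Or.inl ⟨hx.1.le, h x (Ioo_subset_Icc_self hx)⟩)
      have hexp : (1-α-1 : ℝ) = -α := by ring
      rw [hexp]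
      have hp : 0 < V x ^ (-α) := Real.rpow_pos_of_pos hVx0 _
      have hkey : V x ^ α * V x ^ (-α) = 1 := by
        rw [← Real.rpow_add hVx0]; simp
      have hmul : V' x * ((1-α) * V x ^ (-α)) ≤ (-c * V x ^ α) * ((1-α) * V x ^ (-α)) :=
        mul_le_mul_of_nonneg_right hV' (mul_nonneg h1α.le hp.le)
      have heq : (-c * V x ^ α) * ((1-α) * V x ^ (-α)) = -(c*(1-α)) := by
        calc (-c * V x ^ α) * ((1-α) * V x ^ (-α))
            = -(c*(1-α)) * (V x ^ α * V x ^ (-α)) := by ring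
          _ = -(c*(1-α)) := by rw [hkey]; ring
      rw [heq] at hmul
      have : V' x * (1-α) * V x ^ (-α) = V' x * ((1-α) * V x ^ (-α)) := by ring
      linarith [this ▸ hmul]
    have hanti : AntitoneOn W (Icc Φ T) := by
      apply antitoneOn_of_deriv_nonpos (convex_Icc Φ T) hWcont
      · intro x hx
        rw [interior_Icc] at hx
        exact (hWd x hx).differentiableAt.differentiableWithinAt
      · intro x hx
        rw [interior_Icc] at hx
        rw [(hWd x hx).deriv]
        exact hWneg x hx
    have hWT := hanti ⟨le_rfl, hΦT.le⟩ ⟨hΦT.le, le_rfl⟩ hΦT.le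
    rw [hWval T, hWval Φ] at hWT
    have hcal : c*(1-α)*(T - Φ) = V Φ ^ (1-α) + c*(1-α) := by
      rw [hT]
      field_simp
      ring
    have hWTnn : 0 ≤ V T ^ (1-α) := Real.rpow_nonneg (hVnonneg T (le_trans hΦ0.le hΦT.le)) _
    nlinarith [hWT, hcal, hWTnn, hc1α]
  -- Phase 2: trapping
  obtain ⟨tbar, htbar_mem, htbarV⟩ := hentry
  have htbar0 : (0:ℝ) ≤ tbar := le_trans hΦ0.le htbar_mem.1
  refine ⟨tbar, htbar0, htbarV, ?_⟩
  have trap : ∀ t, tbar ≤ t → V t ≤ k * η t := by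
    intro t₁ ht₁
    by_contra hgt
    push_neg at hgt
    obtain ⟨g, hgdef⟩ : ∃ g : ℝ → ℝ, g = fun t => V t - k * η t := ⟨_, rfl⟩
    have hgval : ∀ t, g t = V t - k * η t := fun t => by rw [hgdef]
    have hgcont : ContinuousOn g (Ici 0) := by
      rw [hgdef]; exact hVcont.sub (continuousOn_const.mul hηcont)
    have hg1 : 0 < g t₁ := by rw [hgval]; linarith
    have hgtb : g tbar ≤ 0 := by
      have hηt := hηpos tbar htbar0
      have := mul_le_mul_of_nonneg_right hk_half hηt.le
      rw [hgval]; linarith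
    obtain ⟨S, hSdef⟩ : ∃ S : Set ℝ, S = Icc tbar t₁ ∩ g ⁻¹' (Iic 0) := ⟨_, rfl⟩
    have hSmem : ∀ x, x ∈ S ↔ (tbar ≤ x ∧ x ≤ t₁) ∧ g x ≤ 0 := fun x => by
      rw [hSdef]; exact Iff.rfl
    have hSne : S.Nonempty := ⟨tbar, (hSmem tbar).2 ⟨⟨le_rfl, ht₁⟩, hgtb⟩⟩
    have hSbdd : BddAbove S := ⟨t₁, fun x hx => ((hSmem x).1 hx).1.2⟩
    have hSclosed : IsClosed S := by
      rw [hSdef]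
      exact (hgcont.mono (fun x hx => le_trans htbar0 hx.1)).preimage_isClosed_of_isClosed
        isClosed_Icc isClosed_Iic
    obtain ⟨s, hs⟩ : ∃ s : ℝ, s = sSup S := ⟨_, rfl⟩
    have hsS := hSclosed.csSup_mem hSne hSbdd
    rw [← hs] at hsS
    obtain ⟨⟨hstb, hst₁'⟩, hgs_le⟩ := (hSmem s).1 hsS
    have hs0 : (0:ℝ) ≤ s := le_trans htbar0 hstb
    have hst₁ : s < t₁ := by
      rcases lt_or_eq_of_le hst₁' with h | h
      · exact h
      · exfalso; rw [h] at hgs_le; linarith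
    have hgpos : ∀ t, s < t → t ≤ t₁ → 0 < g t := by
      intro t hst htt₁
      by_contra hle
      push_neg at hle
      have htS : t ∈ S := (hSmem t).2 ⟨⟨le_trans hstb hst.le, htt₁⟩, hle⟩
      have := le_csSup hSbdd htS
      rw [← hs] at this
      linarith
    have hIoc : Ioc s t₁ ∈ 𝓝[>] s := Ioc_mem_nhdsGT_of_mem ⟨le_rfl, hst₁⟩
    have hgs0 : g s = 0 := by
      have hsub : Ioi s ⊆ Ici (0:ℝ) := fun x hx => le_trans hs0 (le_of_lt hx)
      have hc' : Tendsto g (𝓝[>] s) (𝓝 (g s)) :=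
        (hgcont s hs0).tendsto.mono_left (nhdsWithin_mono s hsub)
      have hev : ∀ᶠ t in 𝓝[>] s, 0 ≤ g t := by
        filter_upwards [hIoc] with t ht
        exact (hgpos t ht.1 ht.2).le
      have hge : 0 ≤ g s := ge_of_tendsto hc' hev
      linarith
    have hVs : V s = k * η s := by
      have := hgval s; rw [hgs0] at this; linarith
    have hηs := hηpos s hs0
    have hV' : V' s ≤ -c * V s ^ α := by
      refine hVineq s hs0 (Or.inr ⟨?_, ?_⟩)
      · rw [hVs]
        exact mul_le_mul_of_nonneg_right hkΦ hηs.le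
      · rw [hVs]
        have := mul_le_mul_of_nonneg_right hk1.le hηs.le
        linarith
    have hder_neg : V' s - k * η' s < 0 := by
      have hηs' := hη' s hs0
      have hbase : 0 < k * η s := by positivity
      have hkηε : k * η s ≤ ε := by
        have h1 := mul_le_mul_of_nonneg_right hk1.le hηs.le
        have h2 := hηε s hs0
        linarith
      have hrpow : (k * η s) ^ (1-α) ≤ ε ^ (1-α) :=
        Real.rpow_le_rpow hbase.le hkηε h1α.le
      have hA : 0 < (k * η s) ^ α := Real.rpow_pos_of_pos hbase _
      have hAB : (k * η s) ^ α * (k * η s) ^ (1-α) = k * η s := by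
        rw [← Real.rpow_add hbase]; simp
      have key : M * (k * η s) < c * (k * η s) ^ α := by
        have hstep1 : M * (k * η s) ≤ (k * η s) ^ α * (M * ε ^ (1-α)) := by
          calc M * (k * η s) = (k * η s) ^ α * (M * (k * η s) ^ (1-α)) := by
                conv_lhs => rw [← hAB]
                ring
            _ ≤ (k * η s) ^ α * (M * ε ^ (1-α)) :=
                mul_le_mul_of_nonneg_left (mul_le_mul_of_nonneg_left hrpow hM) hA.le
        have hstep2 : (k * η s) ^ α * (M * ε ^ (1-α)) < (k * η s) ^ α * c :=
          mul_lt_mul_of_pos_left hMε hA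
        nlinarith
      have h2 : -(k * η' s) ≤ k * (M * η s) := by
        have := mul_le_mul_of_nonneg_left hηs' hk0.le
        linarith
      have h3 : V' s ≤ -c * (k * η s) ^ α := by rw [← hVs]; exact hV'
      linarith [h2, h3, key]
    have hgd : HasDerivWithinAt g (V' s - k * η' s) (Ici 0) s := by
      rw [hgdef]
      exact (hVderiv s hs0).sub ((hηderiv s hs0).const_mul k)
    have hgd' : HasDerivWithinAt g (V' s - k * η' s) (Ioi s) s :=
      hgd.mono (fun x hx => le_trans hs0 (le_of_lt hx))
    rw [hasDerivWithinAt_iff_tendsto_slope,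
        Set.diff_singleton_eq_self notMem_Ioi_self] at hgd'
    have hev : ∀ᶠ t in 𝓝[>] s, 0 ≤ slope g s t := by
      filter_upwards [hIoc] with t ht
      have hgt' := hgpos t ht.1 ht.2
      rw [slope_def_field]
      have hts : (0:ℝ) < t - s := sub_pos.mpr ht.1
      apply div_nonneg _ hts.le
      rw [hgs0]; linarith
    have := ge_of_tendsto hgd' hev
    linarith
  intro t ht
  have ht0 : 0 ≤ t := le_trans htbar0 ht
  have h1 := trap t ht
  have h2 := hηpos t ht0
  have h3 := mul_lt_mul_of_pos_right hk1 h2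
  exact ⟨h1, by linarith⟩
end

section
/- Let c > 0, α ∈ (0,1), ε > 0, M ≥ 0 with M·ε^{1-α} < c, and Φ̄ > 1. Let t₀ ≥ 0 and let η : [t₀,∞) → (0, ε] be a C¹ nonincreasing function with -η'(t) ≤ M·η(t) for all t ≥ t₀. Let V : [t₀,∞) → [0,∞) be differentiable with V(t₀) ≤ η(t₀)/2, and suppose that for every t ≥ t₀ with (1 - 1/Φ̄)·η(t) ≤ V(t) ≤ η(t) one has V'(t) ≤ -c·V(t)^α. Then for every t ≥ t₀, V(t) ≤ max(1/2, 1 - 1/Φ̄)·η(t); in particular V(t) < η(t) for all t ≥ t₀. -/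
/-- trapping (forward invariance) lemma. Once the Lyapunov value
is below half the barrier level `η(t₀)`, it stays below
`max(1/2, 1 - 1/Φ̄)·η(t) < η(t)` for all later times. -/
theorem stmt_1
    (c α ε M Φ t₀ : ℝ)
    (hc : 0 < c) (hα : α ∈ Set.Ioo (0 : ℝ) 1) (hε : 0 < ε) (hM : 0 ≤ M)
    (hMε : M * ε ^ (1 - α) < c) (hΦ : 1 < Φ) (ht₀ : 0 ≤ t₀)
    (η η' V V' : ℝ → ℝ)
    (hηpos : ∀ t, t₀ ≤ t → 0 < η t)
    (hηle : ∀ t, t₀ ≤ t → η t ≤ ε)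
    (hηderiv : ∀ t, t₀ ≤ t → HasDerivWithinAt η (η' t) (Set.Ici t₀) t)
    (hη'cont : ContinuousOn η' (Set.Ici t₀))
    (hηmono : AntitoneOn η (Set.Ici t₀))
    (hη' : ∀ t, t₀ ≤ t → -η' t ≤ M * η t)
    (hVnonneg : ∀ t, t₀ ≤ t → 0 ≤ V t)
    (hVderiv : ∀ t, t₀ ≤ t → HasDerivWithinAt V (V' t) (Set.Ici t₀) t)
    (hV0 : V t₀ ≤ η t₀ / 2)
    (hVineq : ∀ t, t₀ ≤ t →
      (1 - 1 / Φ) * η t ≤ V t → V t ≤ η t → V' t ≤ -c * V t ^ α) :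
    ∀ t, t₀ ≤ t →
      V t ≤ max (1 / 2) (1 - 1 / Φ) * η t ∧ V t < η t := by
  set β : ℝ := max (1 / 2) (1 - 1 / Φ) with hβdef
  have hΦpos : (0 : ℝ) < 1 / Φ := by positivity
  have hβhalf : (1 / 2 : ℝ) ≤ β := le_max_left _ _
  have hβ1 : β < 1 := max_lt (by norm_num) (by linarith)
  have hβpos : (0 : ℝ) < β := lt_of_lt_of_le (by norm_num) hβhalf
  have hβΦ : 1 - 1 / Φ ≤ β := le_max_right _ _
  have hVcont : ContinuousOn V (Set.Ici t₀) := fun x hx =>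
    (hVderiv x hx).continuousWithinAt
  have hηcont : ContinuousOn η (Set.Ici t₀) := fun x hx =>
    (hηderiv x hx).continuousWithinAt
  have main : ∀ t, t₀ ≤ t → V t ≤ β * η t := by
    intro b hb
    have key : ∀ ⦃x⦄, x ∈ Set.Icc t₀ b → V x ≤ β * η x := by
      refine image_le_of_deriv_right_lt_deriv_boundary'
        (B := fun s => β * η s) (B' := fun s => β * η' s)
        (hVcont.mono Set.Icc_subset_Ici_self)
        (fun x hx => (hVderiv x hx.1).mono (Set.Ici_subset_Ici.2 hx.1))
        ?_ ((hηcont.mono Set.Icc_subset_Ici_self).const_smul β)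
        (fun x hx => ((hηderiv x hx.1).const_mul β).mono (Set.Ici_subset_Ici.2 hx.1))
        ?_
      · show V t₀ ≤ β * η t₀
        nlinarith [mul_le_mul_of_nonneg_right hβhalf (hηpos t₀ le_rfl).le]
      · intro x hx hVx
        have hxt : t₀ ≤ x := hx.1
        have hηx : 0 < η x := hηpos x hxt
        have h1 : (1 - 1 / Φ) * η x ≤ V x := by
          rw [hVx]; exact mul_le_mul_of_nonneg_right hβΦ hηx.le
        have h2 : V x ≤ η x := by
          rw [hVx]
          show β * η x ≤ η x
          nlinarith [mul_lt_mul_of_pos_right hβ1 hηx]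
        have hV' : V' x ≤ -c * V x ^ α := hVineq x hxt h1 h2
        set y := β * η x with hy
        have hypos : 0 < y := by positivity
        have hyε : y ≤ ε := le_trans (by nlinarith) (hηle x hxt)
        have hyα : 0 < y ^ α := Real.rpow_pos_of_pos hypos α
        have hsplit : y ^ (1 - α) * y ^ α = y := by
          rw [← Real.rpow_add hypos, sub_add_cancel, Real.rpow_one]
        have h3 : M * y ≤ M * ε ^ (1 - α) * y ^ α := by
          calc M * y = M * (y ^ (1 - α) * y ^ α) := by rw [hsplit]
            _ ≤ M * (ε ^ (1 - α) * y ^ α) := by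
                have h := Real.rpow_le_rpow hypos.le hyε (by linarith [hα.2] : (0:ℝ) ≤ 1 - α)
                exact mul_le_mul_of_nonneg_left (mul_le_mul_of_nonneg_right h hyα.le) hM
            _ = M * ε ^ (1 - α) * y ^ α := by ring
        have h4 : M * y < c * y ^ α := lt_of_le_of_lt h3 (by nlinarith)
        have h5 : -(M * η x) ≤ η' x := by linarith [hη' x hxt]
        have h6 : -(M * y) ≤ β * η' x := by
          rw [hy]
          calc -(M * (β * η x)) = β * -(M * η x) := by ring
            _ ≤ β * η' x := by nlinarith
        calc V' x ≤ -c * V x ^ α := hV'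
          _ = -(c * y ^ α) := by rw [hVx]; ring
          _ < -(M * y) := by linarith
          _ ≤ β * η' x := h6
    exact key ⟨hb, le_rfl⟩
  intro t ht
  refine ⟨main t ht, lt_of_le_of_lt (main t ht) ?_⟩
  nlinarith [hηpos t ht]
end

section
/- Let c > 0, α ∈ (0,1), ε > 0, M ≥ 0 with M·ε^{1-α} < c, Φ̄ > 1, and t₀ ≥ 0. Let V : [t₀,∞) → [0,∞) be differentiable with V(t₀) ≤ ε/2, and suppose that for every t ≥ t₀ with (1 - 1/Φ̄)·ε·e^{-M(t-t₀)} ≤ V(t) ≤ ε·e^{-M(t-t₀)} one has V'(t) ≤ -c·V(t)^α. Then V(t) < ε·e^{-M(t-t₀)} for all t ≥ t₀; in particular V(t) converges to 0 as t → ∞ with exponential rate M. -/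
/-!
The level `V = θ η` with `θ = max (1/2) (1 - 1/Φ) < 1` lies in the critical band, and `V` starts
below it. On that level the differential inequality gives `V' ≤ -c (θη)^α`, which beats the
barrier's own slope `-M θη` because `M y < c y^α` for `0 < y ≤ ε` when `M ε^{1-α} < c`. So `V`
can never cross `θ η`, and `θ η < η`.
-/

open Real Set

lemma mul_lt_mul_rpow_of_mul_rpow_lt {M c α ε y : ℝ} (hM : 0 ≤ M) (hα : α ≤ 1)
    (hMε : M * ε ^ (1 - α) < c) (hy : 0 < y) (hyε : y ≤ ε) : M * y < c * y ^ α :=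
  calc M * y = M * y ^ (1 - α) * y ^ α := by
        rw [mul_assoc, ← rpow_add hy, sub_add_cancel, rpow_one]
    _ ≤ M * ε ^ (1 - α) * y ^ α := by gcongr
    _ < c * y ^ α := by gcongr

theorem le_of_hasDerivWithinAt_Ici_of_boundary {f f' B B' : ℝ → ℝ} {a : ℝ}
    (hf : ∀ x, a ≤ x → HasDerivWithinAt f (f' x) (Ici a) x) (ha : f a ≤ B a)
    (hB : ∀ x, HasDerivAt B (B' x) x) (bound : ∀ x, a ≤ x → f x = B x → f' x < B' x)
    (x : ℝ) (hx : a ≤ x) : f x ≤ B x :=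
  image_le_of_deriv_right_lt_deriv_boundary
    (fun y hy => (hf y hy.1).continuousWithinAt.mono Icc_subset_Ici_self)
    (fun y hy => (hf y hy.1).mono (Ici_subset_Ici.2 hy.1)) ha hB
    (fun y hy => bound y hy.1) ⟨hx, le_rfl⟩

lemma hasDerivAt_const_mul_exp_neg_mul_sub (k M t₀ t : ℝ) :
    HasDerivAt (fun t => k * exp (-M * (t - t₀))) (-M * (k * exp (-M * (t - t₀)))) t :=
  ((((hasDerivAt_id t).sub_const t₀).const_mul (-M)).exp.const_mul k).congr_deriv
    (by simp only [id]; ring)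

lemma mul_exp_neg_mul_sub_le {ε M t₀ t : ℝ} (hε : 0 ≤ ε) (hM : 0 ≤ M) (ht : t₀ ≤ t) :
    ε * exp (-M * (t - t₀)) ≤ ε :=
  mul_le_of_le_one_right hε (exp_le_one_iff.2 (by nlinarith))

theorem stmt_3_general
    (c α ε M Φ t₀ : ℝ)
    (hα : α ∈ Set.Ioo (0 : ℝ) 1) (hε : 0 < ε) (hM : 0 ≤ M)
    (hMε : M * ε ^ (1 - α) < c) (hΦ : 1 < Φ)
    (V V' : ℝ → ℝ)
    (hVderiv : ∀ t, t₀ ≤ t → HasDerivWithinAt V (V' t) (Set.Ici t₀) t)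
    (hV0 : V t₀ ≤ ε / 2)
    (hVineq : ∀ t, t₀ ≤ t →
      (1 - 1 / Φ) * (ε * Real.exp (-M * (t - t₀))) ≤ V t →
      V t ≤ ε * Real.exp (-M * (t - t₀)) →
      V' t ≤ -c * V t ^ α) :
    ∀ t, t₀ ≤ t → V t < ε * Real.exp (-M * (t - t₀)) := by
  set θ : ℝ := max (1 / 2) (1 - 1 / Φ)
  have hθ₀ : 0 < θ := lt_max_of_lt_left one_half_pos
  have hθ₁ : θ < 1 := max_lt one_half_lt_one (by linarith [one_div_pos.2 (zero_lt_one.trans hΦ)])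
  intro t ht
  refine (le_of_hasDerivWithinAt_Ici_of_boundary hVderiv ?_
    (fun x => hasDerivAt_const_mul_exp_neg_mul_sub (θ * ε) M t₀ x) ?_ t ht).trans_lt ?_
  · simp only [sub_self, mul_zero, exp_zero, mul_one]
    nlinarith [le_max_left (1 / 2 : ℝ) (1 - 1 / Φ)]
  · intro x hx hVx
    have hη : 0 < ε * exp (-M * (x - t₀)) := by positivity
    have hθη : V x = θ * (ε * exp (-M * (x - t₀))) := by rw [hVx, mul_assoc]
    have hband := hVineq x hx (hθη ▸ by gcongr; exact le_max_right _ _)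
      (hθη ▸ mul_le_of_le_one_left hη.le hθ₁.le)
    have hVε : V x ≤ ε := hθη ▸ (mul_le_of_le_one_left hη.le hθ₁.le).trans
      (mul_exp_neg_mul_sub_le hε.le hM hx)
    have hslope := mul_lt_mul_rpow_of_mul_rpow_lt hM hα.2.le hMε (hθη ▸ by positivity) hVε
    rw [← hVx]
    linarith
  · rw [mul_assoc]
    exact mul_lt_of_lt_one_left (by positivity) hθ₁

/-- exponential-decay corollary. With the exponential barrier
`η(t) = ε e^{-M(t-t₀)}`, once `V(t₀) ≤ ε/2` and the differential inequality
holds in the critical band, the Lyapunov value stays strictly below the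
exponentially decaying barrier for all `t ≥ t₀`. -/
theorem stmt_3
    (c α ε M Φ t₀ : ℝ)
    (hc : 0 < c) (hα : α ∈ Set.Ioo (0 : ℝ) 1) (hε : 0 < ε) (hM : 0 ≤ M)
    (hMε : M * ε ^ (1 - α) < c) (hΦ : 1 < Φ) (ht₀ : 0 ≤ t₀)
    (V V' : ℝ → ℝ)
    (hVnonneg : ∀ t, t₀ ≤ t → 0 ≤ V t)
    (hVderiv : ∀ t, t₀ ≤ t → HasDerivWithinAt V (V' t) (Set.Ici t₀) t)
    (hV0 : V t₀ ≤ ε / 2)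
    (hVineq : ∀ t, t₀ ≤ t →
      (1 - 1 / Φ) * (ε * Real.exp (-M * (t - t₀))) ≤ V t →
      V t ≤ ε * Real.exp (-M * (t - t₀)) →
      V' t ≤ -c * V t ^ α) :
    ∀ t, t₀ ≤ t → V t < ε * Real.exp (-M * (t - t₀)) :=
  stmt_3_general c α ε M Φ t₀ hα hε hM hMε hΦ V V' hVderiv hV0 hVineq
end

section
/- Let γₘ > 0, k > 0, φ̄ > 0, let h_m ≤ 0 be a real number, and set Φ̄ = (φ̄ - h_m)/(k·γₘ). Let g : [0,∞) → (0,∞) be a function satisfying x·(γₘ·g(x) - 1) ≥ h_m for all x ≥ 0. Let u₀, P, φ, γ, φ̂ be real numbers with u₀ ≠ 0, P·u₀ ≤ 0, |φ| ≤ φ̄, γ ≥ γₘ, and φ̂ ≥ 0. Then P·( γ·( g(|u₀|)·u₀ + k·sgn(u₀)·φ̂ ) + φ ) - P·u₀ ≤ -|P|·( (γₘ·g(|u₀|) - 1)·|u₀| + k·γₘ·φ̂ - φ̄ ) ≤ -k·γₘ·|P|·( φ̂ - Φ̄ ), where sgn(x) = x/|x| for x ≠ 0. -/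
/-- pointwise algebraic estimate behind inequality (12) of the
paper, with `sgn(u₀) = u₀/|u₀|` since `u₀ ≠ 0`. -/
theorem stmt_6
    (γm k φbar hm Φ : ℝ)
    (hγm : 0 < γm) (hk : 0 < k) (hφbar : 0 < φbar) (hhm : hm ≤ 0)
    (hΦ : Φ = (φbar - hm) / (k * γm))
    (g : ℝ → ℝ)
    (hgpos : ∀ x, 0 ≤ x → 0 < g x)
    (hghm : ∀ x, 0 ≤ x → hm ≤ x * (γm * g x - 1))
    (u₀ P φ γ φhat : ℝ)
    (hu₀ : u₀ ≠ 0) (hPu₀ : P * u₀ ≤ 0) (hφ : |φ| ≤ φbar)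
    (hγ : γm ≤ γ) (hφhat : 0 ≤ φhat) :
    P * (γ * (g |u₀| * u₀ + k * (u₀ / |u₀|) * φhat) + φ) - P * u₀ ≤
      -|P| * ((γm * g |u₀| - 1) * |u₀| + k * γm * φhat - φbar) ∧
    -|P| * ((γm * g |u₀| - 1) * |u₀| + k * γm * φhat - φbar) ≤
      -(k * γm) * |P| * (φhat - Φ) := by
  have hs : (0:ℝ) < |u₀| := abs_pos.mpr hu₀
  have habs : |P * u₀| = -(P * u₀) := abs_of_nonpos hPu₀
  have hPu : P * u₀ = -(|P| * |u₀|) := by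
    have := abs_mul P u₀; linarith
  have hPs : P * (u₀ / |u₀|) = -|P| := by
    rw [mul_div_assoc', hPu]
    field_simp
  have hPφ : P * φ ≤ |P| * φbar := by
    calc P * φ ≤ |P * φ| := le_abs_self _
    _ = |P| * |φ| := abs_mul _ _
    _ ≤ |P| * φbar := by
        exact mul_le_mul_of_nonneg_left hφ (abs_nonneg _)
  have hgp : 0 < g |u₀| := hgpos _ hs.le
  have hPnn : (0:ℝ) ≤ |P| := abs_nonneg _
  constructor
  · have hexp : P * (γ * (g |u₀| * u₀ + k * (u₀ / |u₀|) * φhat) + φ) - P * u₀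
        = γ * g (|u₀|) * (P * u₀) + γ * k * φhat * (P * (u₀ / |u₀|)) + P * φ - P * u₀ := by
      ring
    rw [hexp, hPu, hPs]
    nlinarith [mul_nonneg (mul_nonneg (sub_nonneg.mpr hγ) hgp.le) (mul_nonneg hPnn hs.le),
      mul_nonneg (mul_nonneg (mul_nonneg (sub_nonneg.mpr hγ) hk.le) hφhat) hPnn]
  · have hA := hghm |u₀| hs.le
    have hΦ' : k * γm * Φ = φbar - hm := by
      rw [hΦ]; field_simp
    nlinarith [mul_nonneg hPnn (show (0:ℝ) ≤ |u₀| * (γm * g |u₀| - 1) - hm by linarith)]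
end

section
/- Let β > 0 and a, b ∈ ℝ, and define the signed power ⌊x⌉^β := |x|^β·sgn(x) with sgn(x) = x/|x| for x ≠ 0 and sgn(0) = 0. Then b·⌊a⌉^β ≤ (|b|^{β+1} + β·|a|^{β+1})/(β+1), with equality if and only if a = b. Equivalently, ∫_a^b (⌊s⌉^β - ⌊a⌉^β) ds ≥ 0 with equality if and only if a = b. -/
/-!
Since `s ↦ ⌊s⌉^β` is strictly increasing, `∫_a^b (⌊s⌉^β - ⌊a⌉^β) ds` is positive whenever
`a ≠ b`. As `|s|^{β+1}/(β+1)` is an antiderivative of `⌊s⌉^β` and `a⌊a⌉^β = |a|^{β+1}`, this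
integral equals `(|b|^{β+1} + β|a|^{β+1})/(β+1) - b⌊a⌉^β`, which gives the Young-type inequality.
-/

/-- Signed power `⌊x⌉^a = |x|^a · sgn(x)` with `sgn(x) = x/|x|` for `x ≠ 0`
and `sgn(0) = 0` (here `Real.sign` has exactly these values). -/
noncomputable def spow (x a : ℝ) : ℝ := |x| ^ a * Real.sign x

open intervalIntegral

theorem StrictMono.integral_sub_apply_left_pos {f : ℝ → ℝ} (hf : StrictMono f) {a b : ℝ}
    (hab : a ≠ b) : 0 < ∫ s in a..b, (f s - f a) := by
  have hint : ∀ u v : ℝ, IntervalIntegrable (fun s => f s - f a) MeasureTheory.volume u v :=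
    fun _ _ => hf.monotone.intervalIntegrable.sub intervalIntegrable_const
  rcases hab.lt_or_gt with h | h
  · exact intervalIntegral_pos_of_pos_on (hint a b) (fun x hx => sub_pos.2 (hf hx.1)) h
  · have hneg : 0 < ∫ s in b..a, -(f s - f a) :=
      intervalIntegral_pos_of_pos_on (hint b a).neg
        (fun x hx => neg_pos.2 (sub_neg.2 (hf hx.2))) h
    rwa [integral_neg, neg_pos, integral_symm, neg_lt_zero] at hneg

theorem StrictMono.integral_sub_apply_left_nonneg {f : ℝ → ℝ} (hf : StrictMono f) (a b : ℝ) :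
    0 ≤ ∫ s in a..b, (f s - f a) := by
  rcases eq_or_ne a b with rfl | hab
  · simp
  · exact (hf.integral_sub_apply_left_pos hab).le

theorem StrictMono.integral_sub_apply_left_eq_zero_iff {f : ℝ → ℝ} (hf : StrictMono f)
    {a b : ℝ} : ∫ s in a..b, (f s - f a) = 0 ↔ a = b := by
  refine ⟨fun h => by_contra fun hab => (hf.integral_sub_apply_left_pos hab).ne' h, ?_⟩
  rintro rfl
  simp

theorem spow_neg (x a : ℝ) : spow (-x) a = -spow x a := by
  simp [spow, Real.sign_neg]

theorem spow_of_nonneg {x : ℝ} (hx : 0 ≤ x) {a : ℝ} (ha : a ≠ 0) : spow x a = x ^ a := by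
  rcases hx.eq_or_lt with rfl | hx
  · simp [spow, Real.zero_rpow ha]
  · simp [spow, abs_of_pos hx, Real.sign_of_pos hx]

theorem spow_strictMono {β : ℝ} (hβ : 0 < β) : StrictMono (spow · β) :=
  strictMono_of_odd_strictMonoOn_nonneg (fun x => spow_neg x β)
    ((Real.strictMonoOn_rpow_Ici_of_exponent_pos hβ).congr
      fun _ hx => (spow_of_nonneg hx hβ.ne').symm)

theorem spow_eq_abs_rpow_sub_one_mul (x a : ℝ) : spow x a = |x| ^ (a - 1) * x := by
  rcases lt_trichotomy x 0 with hx | rfl | hx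
  · rw [spow, Real.sign_of_neg hx, Real.rpow_sub_one (abs_ne_zero.2 hx.ne), abs_of_neg hx]
    field_simp [hx.ne]
  · simp [spow]
  · rw [spow, Real.sign_of_pos hx, Real.rpow_sub_one (abs_ne_zero.2 hx.ne'), abs_of_pos hx]
    field_simp

theorem Real.self_mul_sign (x : ℝ) : x * Real.sign x = |x| := by
  rcases lt_trichotomy x 0 with hx | rfl | hx
  · simp [abs_of_neg hx, Real.sign_of_neg hx]
  · simp
  · simp [abs_of_pos hx, Real.sign_of_pos hx]

theorem self_mul_spow {a : ℝ} (ha : a + 1 ≠ 0) (x : ℝ) : x * spow x a = |x| ^ (a + 1) := by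
  rw [spow, Real.rpow_add_one' (abs_nonneg x) ha, ← Real.self_mul_sign x]
  ring

theorem hasDerivAt_abs_rpow_add_one_div {β : ℝ} (hβ : 0 < β) (x : ℝ) :
    HasDerivAt (fun t => |t| ^ (β + 1) / (β + 1)) (spow x β) x := by
  refine ((hasDerivAt_abs_rpow x (p := β + 1) (by linarith)).div_const (β + 1)).congr_deriv ?_
  rw [spow_eq_abs_rpow_sub_one_mul]
  field_simp
  ring_nf

theorem integral_spow_sub_spow {β : ℝ} (hβ : 0 < β) (a b : ℝ) :
    ∫ s in a..b, (spow s β - spow a β) =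
      (|b| ^ (β + 1) + β * |a| ^ (β + 1)) / (β + 1) - b * spow a β := by
  have hint : IntervalIntegrable (spow · β) MeasureTheory.volume a b :=
    (spow_strictMono hβ).monotone.intervalIntegrable
  rw [integral_sub hint intervalIntegrable_const,
    integral_eq_sub_of_hasDerivAt (fun x _ => hasDerivAt_abs_rpow_add_one_div hβ x) hint,
    integral_const, smul_eq_mul, ← self_mul_spow (by linarith : β + 1 ≠ 0) a]
  field_simp
  ring

/-- Young-type inequality
`b⌊a⌉^β ≤ (|b|^{β+1} + β|a|^{β+1})/(β+1)`, with equality iff `a = b`;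
equivalently `∫_a^b (⌊s⌉^β - ⌊a⌉^β) ds ≥ 0` with equality iff `a = b`. -/
theorem stmt_15
    (β a b : ℝ) (hβ : 0 < β) :
    (b * spow a β ≤ (|b| ^ (β + 1) + β * |a| ^ (β + 1)) / (β + 1)) ∧
    (b * spow a β = (|b| ^ (β + 1) + β * |a| ^ (β + 1)) / (β + 1) ↔ a = b) ∧
    (0 ≤ ∫ s in a..b, (spow s β - spow a β)) ∧
    ((∫ s in a..b, (spow s β - spow a β)) = 0 ↔ a = b) := by
  have hmono := spow_strictMono hβ
  have hnonneg := hmono.integral_sub_apply_left_nonneg a b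
  have hzero := hmono.integral_sub_apply_left_eq_zero_iff (a := a) (b := b)
  rw [integral_spow_sub_spow hβ] at hnonneg hzero ⊢
  exact ⟨sub_nonneg.1 hnonneg, by rw [← hzero, sub_eq_zero, eq_comm], hnonneg, hzero⟩
end
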